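/- Let p > 3 be a prime and let C = 2σ₁³ + σ₁²σ₂ − σ₁² − 4σ₂² − 8σ₁σ₂ + 12σ₁ + 12σ₂ − 36 ∈ F̄_p[σ₁, σ₂]. Then C is irreducible, the affine plane curve C = 0 has a unique singular point, namely (σ₁, σ₂) = (−6, 12), and the singularity is a cusp: after the translation σ₁′ = σ₁ + 6, σ₂′ = σ₂ − 12, the lowest-degree homogeneous component of the translated polynomial is −(5σ₁′ + 2σ₂′)², a scalar multiple of the square of a linear form. Similarly, for p = 3 the polynomial 2σ₁³ + σ₁²σ₂ − σ₁² − σ₂² − 2σ₁σ₂ ∈ F̄_3[σ₁, σ₂] is irreducible, its zero locus has the unique singular point (0,0), and its lowest-degree homogeneous component at (0,0) is −(σ₁ + σ₂)². -/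

import Mathlib

/-!
Both curves are translates of cuspidal cubics `x²(2x + y) = (ux + vy)²` with `v ≠ 0` and
`u ≠ 2v`: moving `(-6, 12)` to the origin turns the first into the case `(u, v) = (5, 2)`, and
the second is the case `(1, 1)` as it stands. For such a cubic, Euler's identity
`x ∂ₓf + y ∂ᵧf - 3f = (ux + vy)²` shows that a singular point lies on the line `ux + vy = 0`,
and then `∂ᵧf = x² - 2v(ux + vy)` forces it to be the origin. A reducible cubic has a linear
factor, so it vanishes identically on a line; restricting the cubic to the lines `x = k` and
`y = mx + k` gives polynomials in one variable whose coefficients cannot all vanish when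
`2`, `v` and `u - 2v` are nonzero.
-/

lemma Derivation.map_ofNat {R A M : Type*} [CommSemiring R] [CommSemiring A] [Algebra R A]
    [AddCommMonoid M] [Module A M] [Module R M] (D : Derivation R A M) (n : ℕ) [n.AtLeastTwo] :
    D (ofNat(n) : A) = 0 := by
  rw [← Nat.cast_ofNat]
  exact D.map_natCast n

namespace MvPolynomial

section CommRing

variable {σ R : Type*} [CommRing R]

lemma eq_C_add_sum_C_mul_X_of_totalDegree_le_one [Fintype σ] {f : MvPolynomial σ R}
    (hf : f.totalDegree ≤ 1) :
    f = C (coeff 0 f) + ∑ i, C (coeff (Finsupp.single i 1) f) * X i := by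
  classical
  ext d
  simp only [coeff_add, coeff_C, coeff_sum, coeff_C_mul, coeff_X, mul_ite, mul_one, mul_zero]
  by_cases hd : coeff d f = 0
  · rw [hd, eq_comm, ite_eq_right_iff.mpr (by rintro rfl; exact hd), zero_add]
    exact Finset.sum_eq_zero fun i _ => ite_eq_right_iff.mpr (by rintro rfl; exact hd)
  · have hdeg := (le_totalDegree (mem_support_iff.mpr hd)).trans hf
    rcases Nat.le_one_iff_eq_zero_or_eq_one.mp hdeg with h0 | h1
    · obtain rfl : d = 0 :=
        Finsupp.ext (by simpa [Finsupp.sum, Finset.sum_eq_zero_iff] using h0)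
      simp
    · obtain ⟨i, rfl⟩ := (Finsupp.sum_eq_one_iff d).mp h1
      simp [Finsupp.single_left_inj, eq_comm (a := (0 : σ →₀ ℕ))]

noncomputable def translation (c : σ → R) : MvPolynomial σ R ≃ₐ[R] MvPolynomial σ R :=
  AlgEquiv.ofAlgHom (aeval fun i => X i + C (c i)) (aeval fun i => X i - C (c i))
    (by ext i; simp) (by ext i; simp)

lemma eval_translation (c x : σ → R) (f : MvPolynomial σ R) :
    eval x (translation c f) = eval (x + c) f := by
  induction f using MvPolynomial.induction_on with
  | C a => simp [translation]
  | add p q hp hq => simp [hp, hq]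
  | mul_X p i h => simp_all [translation]

lemma pderiv_translation (c : σ → R) (i : σ) (f : MvPolynomial σ R) :
    pderiv i (translation c f) = translation c (pderiv i f) := by
  classical
  induction f using MvPolynomial.induction_on with
  | C a => simp [translation]
  | add p q hp hq => simp [hp, hq]
  | mul_X p j h =>
    simp only [map_mul, Derivation.leibniz, pderiv_X, h, smul_eq_mul, map_add]
    simp [translation, Pi.single_apply]

end CommRing

section Field

variable {σ K : Type*} [Field K]

lemma irreducible_of_forall_totalDegree_eq_one_not_dvd {f : MvPolynomial σ K}
    (hf₀ : 0 < f.totalDegree) (hf₃ : f.totalDegree ≤ 3)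
    (hf : ∀ g : MvPolynomial σ K, g.totalDegree = 1 → ¬ g ∣ f) : Irreducible f where
  not_isUnit H := by simp [(isUnit_iff_totalDegree_of_isReduced.mp H).2] at hf₀
  isUnit_or_isUnit a b hab := by
    subst hab
    have ha₀ : a ≠ 0 := by rintro rfl; simp at hf₀
    have hb₀ : b ≠ 0 := by rintro rfl; simp at hf₀
    have isUnit_of_totalDegree_eq_zero {g : MvPolynomial σ K} (hg : g ≠ 0)
        (hg₀ : g.totalDegree = 0) : IsUnit g := by
      rw [totalDegree_eq_zero_iff_eq_C] at hg₀
      rw [hg₀] at hg ⊢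
      exact (isUnit_iff_ne_zero.mpr (by simpa using hg)).map C
    have hdeg := totalDegree_mul_of_isDomain ha₀ hb₀
    by_contra! hab
    have ha : a.totalDegree ≠ 0 := fun h => hab.1 (isUnit_of_totalDegree_eq_zero ha₀ h)
    have hb : b.totalDegree ≠ 0 := fun h => hab.2 (isUnit_of_totalDegree_eq_zero hb₀ h)
    rcases (by omega : a.totalDegree = 1 ∨ b.totalDegree = 1) with h | h
    · exact hf a h (dvd_mul_right a b)
    · exact hf b h (dvd_mul_left b a)

lemma exists_line_aeval_eq_zero_of_totalDegree_eq_one {g : MvPolynomial (Fin 2) K}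
    (hg : g.totalDegree = 1) :
    (∃ k : K, aeval ![Polynomial.C k, Polynomial.X] g = 0) ∨
      ∃ m k : K, aeval ![Polynomial.X, Polynomial.C m * Polynomial.X + Polynomial.C k] g = 0 := by
  have hlin := eq_C_add_sum_C_mul_X_of_totalDegree_le_one hg.le
  rw [Fin.sum_univ_two] at hlin
  set c := coeff 0 g
  set a := coeff (Finsupp.single 0 1) g
  set b := coeff (Finsupp.single 1 1) g
  by_cases hb : b = 0
  · have ha : a ≠ 0 := by
      rintro ha
      rw [hlin, ha, hb] at hg
      simp at hg
    refine .inl ⟨-c / a, ?_⟩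
    rw [hlin]
    simp [hb, ← Polynomial.C_mul, mul_div_cancel₀ _ ha]
  · refine .inr ⟨-a / b, -c / b, ?_⟩
    rw [hlin]
    simp [mul_add, ← mul_assoc, ← Polynomial.C_mul, mul_div_cancel₀ _ hb]

lemma irreducible_of_aeval_line_ne_zero {f : MvPolynomial (Fin 2) K}
    (hf₀ : 0 < f.totalDegree) (hf₃ : f.totalDegree ≤ 3)
    (hvert : ∀ k : K, aeval ![Polynomial.C k, Polynomial.X] f ≠ 0)
    (hslope : ∀ m k : K,
      aeval ![Polynomial.X, Polynomial.C m * Polynomial.X + Polynomial.C k] f ≠ 0) :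
    Irreducible f := by
  refine irreducible_of_forall_totalDegree_eq_one_not_dvd hf₀ hf₃ fun g hg ⟨h, hgh⟩ => ?_
  rcases exists_line_aeval_eq_zero_of_totalDegree_eq_one hg with ⟨k, hk⟩ | ⟨m, k, hk⟩
  · exact hvert k (by rw [hgh, map_mul, hk, zero_mul])
  · exact hslope m k (by rw [hgh, map_mul, hk, zero_mul])

end Field

end MvPolynomial

open MvPolynomial

noncomputable def cuspidalCubic {R : Type*} [CommRing R] (u v : R) : MvPolynomial (Fin 2) R :=
  X 0 ^ 2 * (2 * X 0 + X 1) - (C u * X 0 + C v * X 1) ^ 2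

section CommRing

variable {R : Type*} [CommRing R] {u v : R}

lemma isHomogeneous_X_sq_mul_two_X_add_X :
    (X 0 ^ 2 * (2 * X 0 + X 1) : MvPolynomial (Fin 2) R).IsHomogeneous 3 := by
  simpa [map_ofNat] using ((isHomogeneous_X R (0 : Fin 2)).pow 2).mul
    ((isHomogeneous_C_mul_X (2 : R) 0).add (isHomogeneous_X R 1))

lemma isHomogeneous_neg_sq_C_mul_X_add_C_mul_X :
    (-(C u * X 0 + C v * X 1) ^ 2 : MvPolynomial (Fin 2) R).IsHomogeneous 2 :=
  (((isHomogeneous_C_mul_X u 0).add (isHomogeneous_C_mul_X v 1)).pow 2).neg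

lemma homogeneousComponent_cuspidalCubic (n : ℕ) :
    homogeneousComponent n (cuspidalCubic u v) =
      (if n = 3 then X 0 ^ 2 * (2 * X 0 + X 1) else 0) +
        (if n = 2 then -(C u * X 0 + C v * X 1) ^ 2 else 0) := by
  rw [cuspidalCubic, sub_eq_add_neg, map_add,
    homogeneousComponent_of_mem isHomogeneous_X_sq_mul_two_X_add_X,
    homogeneousComponent_of_mem isHomogeneous_neg_sq_C_mul_X_add_C_mul_X]

variable [IsDomain R]

lemma totalDegree_cuspidalCubic : (cuspidalCubic u v).totalDegree = 3 := by
  have hne : (2 * X 0 + X 1 : MvPolynomial (Fin 2) R) ≠ 0 := fun h => by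
    simpa using congrArg (eval ![0, 1]) h
  have h3 := isHomogeneous_X_sq_mul_two_X_add_X.totalDegree (R := R)
    (mul_ne_zero (pow_ne_zero 2 (X_ne_zero 0)) hne)
  rw [cuspidalCubic, sub_eq_add_neg, totalDegree_add_eq_left_of_totalDegree_lt, h3]
  exact h3 ▸ isHomogeneous_neg_sq_C_mul_X_add_C_mul_X.totalDegree_le.trans_lt (by norm_num)

lemma cuspidalCubic_singular_iff (hv : v ≠ 0) (a b : R) :
    (eval ![a, b] (cuspidalCubic u v) = 0 ∧ eval ![a, b] (pderiv 0 (cuspidalCubic u v)) = 0 ∧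
      eval ![a, b] (pderiv 1 (cuspidalCubic u v)) = 0) ↔ a = 0 ∧ b = 0 := by
  have hf : eval ![a, b] (cuspidalCubic u v) = a ^ 2 * (2 * a + b) - (u * a + v * b) ^ 2 := by
    simp [cuspidalCubic]
  have hx : eval ![a, b] (pderiv 0 (cuspidalCubic u v)) =
      6 * a ^ 2 + 2 * a * b - 2 * u * (u * a + v * b) := by
    simp [cuspidalCubic, Derivation.leibniz, Derivation.leibniz_pow, pderiv_X, Derivation.map_ofNat]
    ring
  have hy : eval ![a, b] (pderiv 1 (cuspidalCubic u v)) = a ^ 2 - 2 * v * (u * a + v * b) := by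
    simp [cuspidalCubic, Derivation.leibniz, Derivation.leibniz_pow, pderiv_X, Derivation.map_ofNat]
    ring
  rw [hf, hx, hy]
  constructor
  · rintro ⟨hf₀, hx₀, hy₀⟩
    have hL : u * a + v * b = 0 :=
      pow_eq_zero_iff two_ne_zero |>.mp (by linear_combination a * hx₀ + b * hy₀ - 3 * hf₀)
    have ha : a = 0 := pow_eq_zero_iff two_ne_zero |>.mp (by linear_combination hy₀ + 2 * v * hL)
    have hvb : v * b = 0 := by linear_combination hL - u * ha
    exact ⟨ha, (mul_eq_zero.mp hvb).resolve_left hv⟩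
  · rintro ⟨rfl, rfl⟩
    simp

end CommRing

lemma irreducible_cuspidalCubic {K : Type*} [Field K] {u v : K} (h2 : (2 : K) ≠ 0) (hv : v ≠ 0)
    (huv : u ≠ 2 * v) : Irreducible (cuspidalCubic u v) := by
  have hdeg : (cuspidalCubic u v).totalDegree = 3 := totalDegree_cuspidalCubic
  refine irreducible_of_aeval_line_ne_zero (by omega) hdeg.le (fun k h => ?_) (fun m k h => ?_)
  · have hres : aeval ![Polynomial.C k, Polynomial.X] (cuspidalCubic u v) =
        Cubic.toPoly ⟨0, -v ^ 2, k ^ 2 - 2 * u * v * k, 2 * k ^ 3 - u ^ 2 * k ^ 2⟩ := by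
      simp [cuspidalCubic, Cubic.toPoly, Polynomial.C_ofNat]
      ring
    rw [h, eq_comm, Cubic.toPoly_eq_zero_iff] at hres
    obtain ⟨-, hb, -, -⟩ := Cubic.mk.inj hres
    exact hv (pow_eq_zero_iff two_ne_zero |>.mp (neg_eq_zero.mp hb))
  · have hres : aeval ![Polynomial.X, Polynomial.C m * Polynomial.X + Polynomial.C k]
        (cuspidalCubic u v) = Cubic.toPoly ⟨2 + m, k - (u + v * m) ^ 2,
          -(2 * (u + v * m) * v * k), -(v ^ 2 * k ^ 2)⟩ := by
      simp [cuspidalCubic, Cubic.toPoly, Polynomial.C_ofNat]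
      ring
    rw [h, eq_comm, Cubic.toPoly_eq_zero_iff] at hres
    obtain ⟨hm, hk, hlin, -⟩ := Cubic.mk.inj hres
    have huv' : u + v * m ≠ 0 := fun h => huv (by linear_combination h - v * hm)
    have hk' : k ≠ 0 := by
      rintro rfl
      exact huv' (pow_eq_zero_iff two_ne_zero |>.mp (by linear_combination -hk))
    simp [h2, hv, huv', hk'] at hlin

open MvPolynomial in
/-- Geometry of the automorphism locus of `M₂(F̄_p)`: for `p > 3` the cubic
`2σ₁³ + σ₁²σ₂ - σ₁² - 4σ₂² - 8σ₁σ₂ + 12σ₁ + 12σ₂ - 36` is irreducible, its zero locus has the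
unique singular point `(-6, 12)`, and after translating that point to the origin the
lowest-degree homogeneous component is `-(5σ₁' + 2σ₂')²` (a cusp); similarly for `p = 3`
with the cubic `2σ₁³ + σ₁²σ₂ - σ₁² - σ₂² - 2σ₁σ₂`, whose unique singular point is `(0,0)`
with lowest-degree homogeneous component `-(σ₁ + σ₂)²`. -/
theorem aut_locus_is_cuspidal_cubic (p : ℕ) [Fact p.Prime]
    (C C' B : MvPolynomial (Fin 2) (AlgebraicClosure (ZMod p)))
    (hC : C = 2 * X 0 ^ 3 + X 0 ^ 2 * X 1 - X 0 ^ 2 - 4 * X 1 ^ 2 - 8 * X 0 * X 1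
        + 12 * X 0 + 12 * X 1 - 36)
    (hC' : C' = aeval ![X 0 - 6, X 1 + 12] C)
    (hB : B = 2 * X 0 ^ 3 + X 0 ^ 2 * X 1 - X 0 ^ 2 - X 1 ^ 2 - 2 * X 0 * X 1) :
    (3 < p →
      Irreducible C ∧
      (∀ a b : AlgebraicClosure (ZMod p),
        (eval ![a, b] C = 0 ∧ eval ![a, b] (pderiv 0 C) = 0 ∧
          eval ![a, b] (pderiv 1 C) = 0) ↔ a = -6 ∧ b = 12) ∧
      homogeneousComponent 0 C' = 0 ∧ homogeneousComponent 1 C' = 0 ∧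
      homogeneousComponent 2 C' = -(5 * X 0 + 2 * X 1) ^ 2) ∧
    (p = 3 →
      Irreducible B ∧
      (∀ a b : AlgebraicClosure (ZMod p),
        (eval ![a, b] B = 0 ∧ eval ![a, b] (pderiv 0 B) = 0 ∧
          eval ![a, b] (pderiv 1 B) = 0) ↔ a = 0 ∧ b = 0) ∧
      homogeneousComponent 0 B = 0 ∧ homogeneousComponent 1 B = 0 ∧
      homogeneousComponent 2 B = -(X 0 + X 1) ^ 2) := by
  have h2 (hp : p ≠ 2) : (2 : AlgebraicClosure (ZMod p)) ≠ 0 :=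
    Ring.two_ne_zero (by rwa [ringChar.eq (AlgebraicClosure (ZMod p)) p])
  refine ⟨fun hp => ?_, fun hp => ?_⟩
  · have h2p := h2 (by omega)
    have h54 : (5 : AlgebraicClosure (ZMod p)) ≠ 2 * 2 := fun h =>
      one_ne_zero (by linear_combination h)
    have hC'_eq : C' = cuspidalCubic 5 2 := by
      rw [hC', hC]; simp [cuspidalCubic, map_ofNat]; ring
    have hC_eq : C = translation ![6, -12] (cuspidalCubic 5 2) := by
      rw [hC]; simp [cuspidalCubic, translation, map_ofNat]; ring
    subst hC'_eq hC_eq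
    refine ⟨(irreducible_cuspidalCubic h2p h2p h54).map _, fun a b => ?_, ?_⟩
    · simp only [pderiv_translation, eval_translation, Matrix.cons_add_cons, Matrix.empty_add_empty,
        cuspidalCubic_singular_iff h2p, add_eq_zero_iff_eq_neg, neg_neg]
    · simp only [homogeneousComponent_cuspidalCubic]
      simp [map_ofNat]
  · have h12 : (1 : AlgebraicClosure (ZMod p)) ≠ 2 * 1 := fun h =>
      one_ne_zero (by linear_combination -h)
    have hB_eq : B = cuspidalCubic 1 1 := by
      rw [hB]; simp [cuspidalCubic]; ring
    subst hB_eq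
    refine ⟨irreducible_cuspidalCubic (h2 (by omega)) one_ne_zero h12,
      fun a b => cuspidalCubic_singular_iff one_ne_zero a b, ?_⟩
    simp only [homogeneousComponent_cuspidalCubic]
    simp
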